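/- If α = (α₀,…,α_p)* and β = (β₀,…,β_q)* are supported on BG (products of coordinates equal e), then for each 0 ≤ j ≤ p-1, Ψ_{p+q-1}((α ∪₁ β)_j) = Ψ_p(α) ∘_{(j)} Ψ_q(β), i.e., the j-th term of Steenrod's cup-one product equals the j-th Gerstenhaber composition. -/

import Mathlib

/-! Common definitions: cochain complexes computing Hochschild cohomology of a
group ring `k[G]`, the inner product, the map `Φ`, and the various products. -/

noncomputable section Defs

variable (k G : Type) [CommRing k] [Group G]

/-- The bilinear inner product on `k[G]`, extending `⟨g, h⟩ = 1` if `h = g⁻¹`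
and `0` otherwise: `⟨a, b⟩ = Σ_g a_g · b_{g⁻¹}`. -/
def ip (a b : MonoidAlgebra k G) : k :=
  Finsupp.sum a.coeff fun g c => c * b.coeff g⁻¹

/-- Hochschild cochains `Hom_k(k[G]^{⊗n}, k[G])`, identified with functions on
the `k`-basis `G^n` of `k[G]^{⊗n}`. -/
abbrev Cochain (n : ℕ) := (Fin n → G) → MonoidAlgebra k G

/-- The `i`-th face of the (cyclic) bar construction for `0 ≤ i ≤ n-1`:
merge entries `i` and `i+1`. -/
def contract {n : ℕ} (g : Fin (n + 1) → G) (i : Fin n) : Fin n → G :=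
  fun j => if j = i then g j.castSucc * g j.succ
    else if (j : ℕ) < (i : ℕ) then g j.castSucc else g j.succ

/-- The Hochschild coboundary `δ` on `Hom_k(k[G]^{⊗n}, k[G])`. -/
def hdelta {n : ℕ} (f : Cochain k G n) : Cochain k G (n + 1) :=
  fun a => MonoidAlgebra.of k G (a 0) * f (Fin.tail a)
    + ∑ i : Fin n, ((-1 : ℤ) ^ ((i : ℕ) + 1)) • f (contract G a i)
    + ((-1 : ℤ) ^ (n + 1)) • (f (Fin.init a) * MonoidAlgebra.of k G (a (Fin.last n)))

/-- The coboundary `b^*` on `Hom_k(k[G]^{⊗(n+1)}, k)`, dual to the cyclic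
Hochschild boundary `b`. -/
def bstar {n : ℕ} (φ : (Fin (n + 1) → G) → k) : (Fin (n + 2) → G) → k :=
  (∑ i : Fin (n + 1), ((-1 : ℤ) ^ (i : ℕ)) • fun g => φ (contract G g i))
    + ((-1 : ℤ) ^ (n + 1)) •
      fun g => φ (fun j => if j = 0 then g (Fin.last (n + 1)) * g 0 else g j.castSucc)

/-- The cochain map `Φ_n(f)(g₀,…,g_n) = ⟨g₀, f(g₁,…,g_n)⟩`. -/
def Phi {n : ℕ} (f : Cochain k G n) : (Fin (n + 1) → G) → k :=
  fun g => ip k G (MonoidAlgebra.of k G (g 0)) (f (Fin.tail g))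

/-- The basis cochain `(g₀, g₁, …, g_n)^# : k[G]^{⊗n} → k[G]`. -/
def sharp {n : ℕ} [DecidableEq G] (g₀ : G) (gs : Fin n → G) : Cochain k G n :=
  fun h => if h = gs then MonoidAlgebra.of k G g₀ else 0

/-- The dual basis cochain `(t₀, …, t_{m-1})^* : k[G]^{⊗m} → k`. -/
def dstar {m : ℕ} [DecidableEq G] (t : Fin m → G) : (Fin m → G) → k :=
  fun h => if h = t then (1 : k) else 0

/-- The map `Ψ`, recorded by its matrix of coefficients:
`Ψ(α)(g₁,…,g_n)` is the element of `k[G]` whose coefficient at `x` is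
`α(x⁻¹, g₁, …, g_n)`; on basis elements `Ψ((g₀,…,g_n)^*) = (g₀⁻¹,g₁,…,g_n)^#`. -/
def Psi {n : ℕ} (α : (Fin (n + 1) → G) → k) : (Fin n → G) → G → k :=
  fun gs x => α (Fin.cons x⁻¹ gs)

/-- The simplicial cup product on `Hom_k(k[G]^{⊗(•+1)}, k)`:
`(α ∪ β)(g₀,…,g_{p+q}) = α(g_{p+1}⋯g_{p+q}g₀, g₁,…,g_p) · β(g₀⋯g_p, g_{p+1},…,g_{p+q})`. -/
def cup {p q : ℕ} (α : (Fin (p + 1) → G) → k) (β : (Fin (q + 1) → G) → k) :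
    (Fin (p + q + 1) → G) → k :=
  fun g =>
    α (Fin.cons
        (((List.ofFn fun t : Fin q => g ⟨p + 1 + (t : ℕ), by have := t.isLt; omega⟩).prod) * g 0)
        (fun i : Fin p => g ⟨(i : ℕ) + 1, by have := i.isLt; omega⟩))
    * β (Fin.cons
        ((List.ofFn fun t : Fin (p + 1) => g ⟨(t : ℕ), by have := t.isLt; omega⟩).prod)
        (fun i : Fin q => g ⟨p + 1 + (i : ℕ), by have := i.isLt; omega⟩))

/-- The Gerstenhaber (cup) product on Hochschild cochains:
`(f ∪_G g)(a₁,…,a_{p+q}) = f(a₁,…,a_p) · g(a_{p+1},…,a_{p+q})`. -/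
def cupG {p q : ℕ} (f : Cochain k G p) (g : Cochain k G q) : Cochain k G (p + q) :=
  fun a => f (a ∘ Fin.castAdd q) * g (a ∘ Fin.natAdd p)

/-- The `j`-th term of Steenrod's cup-one product, for `α` of degree `p+1` and
`β` of degree `q` (so `0 ≤ j ≤ (p+1)-1`):
`(α ∪₁ β)_j(σ) = α(σ₀,…,σ_j, σ_{j+1}⋯σ_{j+q}, σ_{j+q+1},…) · β(σ_{j+q+1}⋯σ_{p+q}σ₀⋯σ_j, σ_{j+1},…,σ_{j+q})`. -/
def cupOneTerm {p q : ℕ} (α : (Fin (p + 2) → G) → k) (β : (Fin (q + 1) → G) → k)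
    (j : Fin (p + 1)) : (Fin (p + q + 1) → G) → k :=
  fun σ =>
    α (fun i : Fin (p + 2) =>
        if h1 : (i : ℕ) ≤ (j : ℕ) then σ ⟨(i : ℕ), by have := j.isLt; omega⟩
        else if h2 : (i : ℕ) = (j : ℕ) + 1 then
          (List.ofFn fun t : Fin q =>
            σ ⟨(j : ℕ) + 1 + (t : ℕ), by have := t.isLt; have := j.isLt; omega⟩).prod
        else σ ⟨(i : ℕ) + q - 1, by have := i.isLt; omega⟩)
    * β (Fin.cons
        (((List.ofFn fun t : Fin (p - (j : ℕ)) =>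
            σ ⟨(j : ℕ) + q + 1 + (t : ℕ), by have := t.isLt; have := j.isLt; omega⟩).prod)
          * ((List.ofFn fun t : Fin ((j : ℕ) + 1) =>
            σ ⟨(t : ℕ), by have := t.isLt; have := j.isLt; omega⟩).prod))
        (fun t : Fin q =>
          σ ⟨(j : ℕ) + 1 + (t : ℕ), by have := t.isLt; have := j.isLt; omega⟩))

/-- Steenrod's cup-one product (for `α` of degree `p+1`, `β` of degree `q`):
`α ∪₁ β = Σ_j (-1)^{((p+1)-1-j)(q-1)} (α ∪₁ β)_j`.  (The exponent is written as
`(p-j)*(q+1)`, which has the same parity as `((p+1)-1-j)*(q-1)` for every `q ≥ 0`.) -/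
def cupOne {p q : ℕ} (α : (Fin (p + 2) → G) → k) (β : (Fin (q + 1) → G) → k) :
    (Fin (p + q + 1) → G) → k :=
  fun σ => ∑ j : Fin (p + 1),
    ((-1 : ℤ) ^ ((p - (j : ℕ)) * (q + 1))) • cupOneTerm k G α β j σ

/-- Gerstenhaber's `j`-th composition `f ∘_{(j)} g` (for `f` of degree `p+1`,
`g` of degree `q`): substitute `g` into the `j`-th slot of (the multilinear
extension of) `f`. -/
def compAt {p q : ℕ} (f : Cochain k G (p + 1)) (g : Cochain k G q) (j : Fin (p + 1)) :
    Cochain k G (p + q) :=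
  fun a => Finsupp.sum
    (g fun t : Fin q => a ⟨(j : ℕ) + (t : ℕ), by have := t.isLt; have := j.isLt; omega⟩).coeff
    (fun x c => c • f (fun i : Fin (p + 1) =>
      if h1 : (i : ℕ) < (j : ℕ) then a ⟨(i : ℕ), by have := j.isLt; omega⟩
      else if h2 : (i : ℕ) = (j : ℕ) then x
      else a ⟨(i : ℕ) + q - 1, by have := i.isLt; omega⟩))

/-- Gerstenhaber's pre-Lie product `f ∘ g = Σ_j (-1)^{(p-1-j)(q-1)} f ∘_{(j)} g`
(`f` of degree `p+1`, `g` of degree `q`; the exponent `(p-j)*(q+1)` has the same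
parity as `((p+1)-1-j)*(q-1)`). -/
def preLie {p q : ℕ} (f : Cochain k G (p + 1)) (g : Cochain k G q) : Cochain k G (p + q) :=
  fun a => ∑ j : Fin (p + 1),
    ((-1 : ℤ) ^ ((p - (j : ℕ)) * (q + 1))) • compAt k G f g j a

/-- The face maps of the cyclic bar construction `N^cy_*(G)`, from
`N^cy_{n+1}(G) = G^{n+2}` to `N^cy_n(G) = G^{n+1}`. -/
def cycFace {n : ℕ} (i : Fin (n + 2)) (g : Fin (n + 2) → G) : Fin (n + 1) → G :=
  if h : (i : ℕ) = n + 1 then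
    fun j => if j = 0 then g (Fin.last (n + 1)) * g 0 else g j.castSucc
  else contract G g ⟨(i : ℕ), by have := i.isLt; omega⟩

/-- The degeneracy maps of the cyclic bar construction: insert the identity
after position `i`. -/
def cycDegen {n : ℕ} (i : Fin (n + 1)) (g : Fin (n + 1) → G) : Fin (n + 2) → G :=
  fun j => if h1 : (j : ℕ) ≤ (i : ℕ) then g ⟨(j : ℕ), by have := i.isLt; omega⟩
    else if h2 : (j : ℕ) = (i : ℕ) + 1 then 1
    else g ⟨(j : ℕ) - 1, by have := j.isLt; omega⟩

/-- The simplicial map `ι : B_*(G) → N^cy_*(G)`,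
`ι(g₁,…,g_n) = ((g₁g₂⋯g_n)⁻¹, g₁, …, g_n)`. -/
def iotaMap {n : ℕ} (g : Fin n → G) : Fin (n + 1) → G :=
  Fin.cons ((List.ofFn g).prod)⁻¹ g

end Defs

/-!
Both sides are indicator functions of `σ`. On basis cochains, `Φ(f ∘_{(j)} g)(σ)` is nonzero
exactly when the window `σ_{j+1},…,σ_{j+q}` is `(β₁,…,β_q)`, replacing that window in
`(σ₁,…,σ_{p+q})` by `β₀⁻¹` gives `(α₁,…,α_{p+1})`, and `σ₀ = α₀`. The arguments of `α` and `β` in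
`(α ∪₁ β)_j(σ)` are built from the same window: `α` sees `σ₀` and the insertion of the window's
product, `β` sees the cyclic product of the remaining entries of `α`'s argument and the window.
On `BG` the window's product is `β₀⁻¹` and that cyclic product is `α_{j+1}⁻¹`, so the two
conditions coincide.
-/

section Window
variable {G : Type} {p q : ℕ}

def compAtWindow (j : Fin (p + 1)) (x : Fin (p + q) → G) : Fin q → G :=
  fun t => x ⟨j + t, by grind⟩

def compAtInsert (j : Fin (p + 1)) (x : Fin (p + q) → G) (y : G) : Fin (p + 1) → G :=
  fun i => if h₁ : (i : ℕ) < j then x ⟨i, by grind⟩ else if h₂ : (i : ℕ) = j then y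
    else x ⟨i + q - 1, by grind⟩

lemma compAtInsert_self (j : Fin (p + 1)) (x : Fin (p + q) → G) (y : G) :
    compAtInsert j x y j = y := by
  simp [compAtInsert]

end Window

section Arguments
variable {M : Type} [Monoid M] {p q : ℕ}

def cyclicProdAfter (j : Fin (p + 1)) (x : Fin (p + 2) → M) : M :=
  (List.ofFn fun t : Fin (p - j) => x ⟨j + 2 + t, by omega⟩).prod *
    (List.ofFn fun t : Fin (j + 1) => x ⟨t, by omega⟩).prod

def cupOneLeftArg (j : Fin (p + 1)) (σ : Fin (p + q + 1) → M) : Fin (p + 2) → M :=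
  fun i => if h₁ : (i : ℕ) ≤ j then σ ⟨i, by grind⟩
    else if h₂ : (i : ℕ) = j + 1 then (List.ofFn fun t : Fin q => σ ⟨j + 1 + t, by grind⟩).prod
    else σ ⟨i + q - 1, by grind⟩

def cupOneRightArg (j : Fin (p + 1)) (σ : Fin (p + q + 1) → M) : Fin (q + 1) → M :=
  Fin.cons
    ((List.ofFn fun t : Fin (p - j) => σ ⟨j + q + 1 + t, by grind⟩).prod *
      (List.ofFn fun t : Fin (j + 1) => σ ⟨t, by grind⟩).prod)
    (fun t : Fin q => σ ⟨j + 1 + t, by grind⟩)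

lemma cupOneLeftArg_eq_cons (j : Fin (p + 1)) (σ : Fin (p + q + 1) → M) :
    cupOneLeftArg j σ = Fin.cons (σ 0)
      (compAtInsert j (Fin.tail σ) (List.ofFn (compAtWindow j (Fin.tail σ))).prod) := by
  funext i
  refine Fin.cases ?_ (fun i => ?_) i
  · simp [cupOneLeftArg]
  · simp only [cupOneLeftArg, compAtInsert, Fin.cons_succ, Fin.tail, Fin.val_succ]
    split_ifs <;> try omega
    · rfl
    · exact congrArg _ (List.ofFn_inj.2 (funext fun t => congrArg σ (Fin.ext (by simp; omega))))
    · exact congrArg σ (Fin.ext (by simp; omega))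

lemma cupOneRightArg_eq_cons (j : Fin (p + 1)) (σ : Fin (p + q + 1) → M) :
    cupOneRightArg j σ =
      Fin.cons (cyclicProdAfter j (cupOneLeftArg j σ)) (compAtWindow j (Fin.tail σ)) := by
  rw [cupOneRightArg, cyclicProdAfter]
  congr 1
  · congr 3 <;> funext t <;> simp only [cupOneLeftArg] <;> split_ifs <;>
      first | omega | (congr 2 <;> omega)
  · funext t
    exact congrArg σ (Fin.ext (by simp; omega))

end Arguments

section BG
variable {G : Type} [Group G]

lemma prod_ofFn_tail_eq_inv {n : ℕ} {b : Fin (n + 1) → G} (hb : (List.ofFn b).prod = 1) :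
    (List.ofFn (Fin.tail b)).prod = (b 0)⁻¹ := by
  rw [List.ofFn_succ, List.prod_cons] at hb
  exact eq_inv_of_mul_eq_one_right hb

lemma cyclicProdAfter_eq_inv {p : ℕ} (j : Fin (p + 1)) {x : Fin (p + 2) → G}
    (hx : (List.ofFn x).prod = 1) : cyclicProdAfter j x = (x j.succ)⁻¹ := by
  have hsplit : (List.ofFn x).prod = (List.ofFn fun t : Fin (j + 1) => x ⟨t, by omega⟩).prod *
      (x j.succ * (List.ofFn fun t : Fin (p - j) => x ⟨j + 2 + t, by omega⟩).prod) := by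
    rw [List.ofFn_congr (show p + 2 = (j + 1) + (p - j + 1) by omega), List.ofFn_add,
      List.prod_append]
    congr 1
    rw [List.ofFn_succ, List.prod_cons]
    congr 1
    exact congrArg _ (List.ofFn_inj.2 (funext fun t => congrArg x (Fin.ext (by simp; omega))))
  rw [hsplit, mul_eq_one_comm, mul_assoc] at hx
  exact eq_inv_of_mul_eq_one_right hx

lemma cupOneArgs_eq_iff {p q : ℕ} {a : Fin (p + 2) → G} {b : Fin (q + 1) → G}
    (ha : (List.ofFn a).prod = 1) (hb : (List.ofFn b).prod = 1) (j : Fin (p + 1))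
    (σ : Fin (p + q + 1) → G) :
    cupOneLeftArg j σ = a ∧ cupOneRightArg j σ = b ↔
      compAtWindow j (Fin.tail σ) = Fin.tail b ∧
        compAtInsert j (Fin.tail σ) (b 0)⁻¹ = Fin.tail a ∧ a 0 = σ 0 := by
  constructor
  · rintro ⟨hl, hr⟩
    have hw : compAtWindow j (Fin.tail σ) = Fin.tail b := by
      rw [← hr, cupOneRightArg_eq_cons, Fin.tail_cons]
    rw [cupOneLeftArg_eq_cons, hw, prod_ofFn_tail_eq_inv hb] at hl
    exact ⟨hw, by rw [← hl, Fin.tail_cons], by rw [← hl, Fin.cons_zero]⟩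
  · rintro ⟨hw, hins, h0⟩
    have hl : cupOneLeftArg j σ = a := by
      rw [cupOneLeftArg_eq_cons, hw, prod_ofFn_tail_eq_inv hb, hins, ← h0, Fin.cons_self_tail]
    have hab : a j.succ = (b 0)⁻¹ := by
      rw [← compAtInsert_self j (Fin.tail σ) (b 0)⁻¹, hins, Fin.tail]
    rw [cupOneRightArg_eq_cons, hl, cyclicProdAfter_eq_inv j ha, hab, inv_inv, hw,
      Fin.cons_self_tail]
    exact ⟨rfl, rfl⟩

end BG

section Cochains
variable {k G : Type} [CommRing k] [Group G]

lemma ip_of_left (g : G) (x : MonoidAlgebra k G) :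
    ip k G (MonoidAlgebra.of k G g) x = x.coeff g⁻¹ := by
  rw [ip, MonoidAlgebra.of_apply, MonoidAlgebra.coeff_single, Finsupp.sum_single_index (zero_mul _),
    one_mul]

lemma Phi_apply {n : ℕ} (f : Cochain k G n) (σ : Fin (n + 1) → G) :
    Phi k G f σ = (f (Fin.tail σ)).coeff (σ 0)⁻¹ :=
  ip_of_left _ _

variable {p q : ℕ}

lemma cupOneTerm_apply (α : (Fin (p + 2) → G) → k) (β : (Fin (q + 1) → G) → k)
    (j : Fin (p + 1)) (σ : Fin (p + q + 1) → G) :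
    cupOneTerm k G α β j σ = α (cupOneLeftArg j σ) * β (cupOneRightArg j σ) :=
  rfl

lemma compAt_sharp_right [DecidableEq G] (f : Cochain k G (p + 1)) (h₀ : G) (hs : Fin q → G)
    (j : Fin (p + 1)) (x : Fin (p + q) → G) :
    compAt k G f (sharp k G h₀ hs) j x =
      if compAtWindow j x = hs then f (compAtInsert j x h₀) else 0 := by
  change ((sharp k G h₀ hs (compAtWindow j x)).coeff.sum fun y c => c • f (compAtInsert j x y)) = _
  unfold sharp
  split_ifs
  · rw [MonoidAlgebra.of_apply, MonoidAlgebra.coeff_single,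
      Finsupp.sum_single_index (by rw [zero_smul]), one_smul]
  · rw [MonoidAlgebra.coeff_zero, Finsupp.sum_zero_index]

end Cochains

/-- if `α = (α₀,…,α_{p+1})^*` (degree `p+1`) and `β = (β₀,…,β_q)^*`
are supported on `BG` (coordinates multiply to `e`), then for each `0 ≤ j ≤ p`,
`Ψ((α ∪₁ β)_j) = Ψ(α) ∘_{(j)} Ψ(β)`: the `j`-th term of Steenrod's cup-one
product equals the `j`-th Gerstenhaber composition.  (Applying the injective
cochain map `Φ`, this is `(α ∪₁ β)_j = Φ(Ψ(α) ∘_{(j)} Ψ(β))`.) -/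
theorem cupOneTerm_eq_compAt_on_BG (k G : Type) [CommRing k] [Group G] [DecidableEq G]
    (p q : ℕ) (a : Fin (p + 2) → G) (b : Fin (q + 1) → G)
    (ha : (List.ofFn a).prod = 1) (hb : (List.ofFn b).prod = 1) (j : Fin (p + 1)) :
    cupOneTerm k G (dstar k G a) (dstar k G b) j =
      Phi k G (compAt k G (sharp k G (a 0)⁻¹ (Fin.tail a))
        (sharp k G (b 0)⁻¹ (Fin.tail b)) j) := by
  funext σ
  rw [cupOneTerm_apply, dstar, dstar, ite_zero_mul_ite_zero, mul_one, Phi_apply,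
    compAt_sharp_right, sharp]
  simp only [cupOneArgs_eq_iff ha hb]
  split_ifs <;> simp_all [MonoidAlgebra.of_apply]
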